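/- Let e_1, …, e_7 be pairwise distinct complex numbers and F the genus-3 Kleinian 2-polar of f(x) = 4∏_{m=1}^{7}(x−e_m). Let s_l be the elementary symmetric functions of {e_1,e_2,e_3} and S_l those of {e_4,e_5,e_6,e_7}. Define p_{33}=s_1, p_{23}=−s_2, p_{13}=s_3, p_{12}=−s_3S_1−S_4, p_{11}=s_3S_2+s_1S_4, p_{22}=S_3+2s_3+s_2S_1. Then for every pair i ≠ j with i,j ∈ {1,2,3}: Σ_{k,l=1}^{3} p_{kl} e_i^{k−1} e_j^{l−1} = F(e_i,e_j)/(4(e_i−e_j)²). -/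

import Mathlib

/-!
The seven branch points split into the roots `e₁, e₂, e₃` of the cubic `q` with elementary
symmetric functions `s_l` and the roots of the quartic `r` with elementary symmetric functions
`S_l`, and `f = 4 q r`. Given two distinct roots `x, z` of `q`, the third is `w = s₁ - x - z`, and
`s₂, s₃` are the elementary symmetric functions of `x, z, w`. Writing the coefficients `λ_k` of `f`
through `x, z, w, S_l`, the claimed formula becomes the polynomial identity
`F(x, z) = 4 (x - z)² ∑ p_{kl} x^{k-1} z^{l-1}` in these seven variables.
-/

open Finset Polynomial

/-- Elementary symmetric function of degree `n` of the values of `f` on `s`. -/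
noncomputable def esymm {ι : Type*} [DecidableEq ι] (s : Finset ι) (n : ℕ) (f : ι → ℂ) : ℂ :=
  ∑ t ∈ Finset.powersetCard n s, ∏ i ∈ t, f i

section

variable {R : Type*} [CommRing R]

noncomputable def vietaPoly (n : ℕ) (a : ℕ → R) : R[X] :=
  ∑ j ∈ range (n + 1), (-1) ^ j * (C (a j) * X ^ (n - j))

def kleinPolar (c : ℕ → R) (x z : R) : R :=
  ∑ k ∈ range 4, x ^ k * z ^ k * (2 * c (2 * k) + c (2 * k + 1) * (z + x))

def halfPeriodWp (s S : ℕ → R) : Matrix (Fin 3) (Fin 3) R :=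
  !![s 3 * S 2 + s 1 * S 4, -(s 3 * S 1) - S 4, s 3;
     -(s 3 * S 1) - S 4, S 3 + 2 * s 3 + s 2 * S 1, -(s 2);
     s 3, -(s 2), s 1]

theorem exists_third_root_of_eval_vietaPoly_three [IsDomain R] {a : ℕ → R} {x z : R}
    (hxz : x ≠ z) (ha0 : a 0 = 1) (hx : (vietaPoly 3 a).eval x = 0)
    (hz : (vietaPoly 3 a).eval z = 0) :
    ∃ w, a 1 = x + z + w ∧ a 2 = x * z + x * w + z * w ∧ a 3 = x * z * w := by
  simp only [vietaPoly, sum_range_succ, sum_range_zero, eval_zero, eval_add, eval_mul, eval_pow,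
    eval_C, eval_X, eval_neg, eval_one, ha0] at hx hz
  have h2 : a 2 = x * z + (x + z) * (a 1 - x - z) := by
    have h : (x - z) * (a 2 - (x * z + (x + z) * (a 1 - x - z))) = 0 := by
      linear_combination hx - hz
    linear_combination (mul_eq_zero.mp h).resolve_left (sub_ne_zero.mpr hxz)
  exact ⟨a 1 - x - z, by ring, by linear_combination h2, by linear_combination -hx + x * h2⟩

theorem kleinPolar_eq_of_roots (x z w : R) (s S c : ℕ → R) (hs0 : s 0 = 1) (hS0 : S 0 = 1)
    (hs1 : s 1 = x + z + w) (hs2 : s 2 = x * z + x * w + z * w) (hs3 : s 3 = x * z * w)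
    (hc : ∀ k, c k = (4 * vietaPoly 3 s * vietaPoly 4 S).coeff k) :
    kleinPolar c x z = 4 * (x - z) ^ 2 *
      ∑ k : Fin 3, ∑ l : Fin 3, halfPeriodWp s S k l * x ^ (k : ℕ) * z ^ (l : ℕ) := by
  simp only [halfPeriodWp, Matrix.of_apply, Matrix.cons_val', Matrix.cons_val_fin_one,
    Fin.sum_univ_three, Fin.isValue, Matrix.cons_val_zero, Fin.coe_ofNat_eq_mod, Nat.zero_mod,
    pow_zero, mul_one, Matrix.cons_val_one, Nat.one_mod, pow_one, Matrix.cons_val, Nat.mod_succ]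
  simp only [kleinPolar, vietaPoly, hc, sum_range_succ]
  simp only [mul_add, add_mul, coeff_add, mul_assoc, ← pow_add, X_pow_mul]
  norm_num
  rw [hs0, hS0, hs1, hs2, hs3]
  ring

end

theorem esymm_zero {ι : Type*} [DecidableEq ι] (s : Finset ι) (f : ι → ℂ) : esymm s 0 f = 1 := by
  simp [esymm]

theorem prod_X_sub_C_eq_vietaPoly {ι : Type*} [DecidableEq ι] (s : Finset ι) (f : ι → ℂ) :
    ∏ i ∈ s, (X - C (f i)) = vietaPoly #s (fun j => esymm s j f) := by
  simp_rw [vietaPoly, esymm, ← Finset.esymm_map_val]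
  simpa [Multiset.map_map] using Multiset.prod_X_sub_X_eq_sum_esymm (s.val.map f)

theorem stmt_4 (e : Fin 7 → ℂ) (he : Function.Injective e)
    (lam : ℕ → ℂ)
    (hlam : ∀ k, lam k = (4 * ∏ m, (X - C (e m)) : Polynomial ℂ).coeff k)
    (F : ℂ → ℂ → ℂ)
    (hF : ∀ x z, F x z = ∑ k ∈ range 4, x^k * z^k * (2 * lam (2*k) + lam (2*k+1) * (z + x)))
    (s S : ℕ → ℂ)
    (hs : ∀ l, s l = esymm ({0, 1, 2} : Finset (Fin 7)) l e)
    (hS : ∀ l, S l = esymm ({3, 4, 5, 6} : Finset (Fin 7)) l e)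
    (P : Fin 3 → Fin 3 → ℂ)
    (hP : P = !![s 3 * S 2 + s 1 * S 4, -(s 3 * S 1) - S 4, s 3;
                 -(s 3 * S 1) - S 4, S 3 + 2 * s 3 + s 2 * S 1, -(s 2);
                 s 3, -(s 2), s 1]) :
    ∀ i j : Fin 7, i ∈ ({0, 1, 2} : Finset (Fin 7)) → j ∈ ({0, 1, 2} : Finset (Fin 7)) →
      i ≠ j →
      (∑ k : Fin 3, ∑ l : Fin 3, P k l * (e i)^(k : ℕ) * (e j)^(l : ℕ))
        = F (e i) (e j) / (4 * (e i - e j)^2) := by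
  intro i j hi hj hij
  have hcubic : ∏ m ∈ {0, 1, 2}, (X - C (e m)) = vietaPoly 3 s := by
    rw [prod_X_sub_C_eq_vietaPoly]
    exact congrArg₂ _ rfl (funext fun l => (hs l).symm)
  have hquartic : ∏ m ∈ {3, 4, 5, 6}, (X - C (e m)) = vietaPoly 4 S := by
    rw [prod_X_sub_C_eq_vietaPoly]
    exact congrArg₂ _ rfl (funext fun l => (hS l).symm)
  have hf : (4 * ∏ m, (X - C (e m)) : ℂ[X]) = 4 * vietaPoly 3 s * vietaPoly 4 S := by
    rw [mul_assoc, ← hcubic, ← hquartic, ← prod_union (by decide)]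
    rfl
  have hroot : ∀ m ∈ ({0, 1, 2} : Finset (Fin 7)), (vietaPoly 3 s).eval (e m) = 0 := fun m hm => by
    rw [← hcubic, eval_prod]
    exact prod_eq_zero hm (by simp)
  have hs0 : s 0 = 1 := (hs 0).trans (esymm_zero _ _)
  obtain ⟨w, hs1, hs2, hs3⟩ :=
    exists_third_root_of_eval_vietaPoly_three (he.ne hij) hs0 (hroot i hi) (hroot j hj)
  have hpolar := kleinPolar_eq_of_roots (e i) (e j) w s S lam hs0 ((hS 0).trans (esymm_zero _ _))
    hs1 hs2 hs3 (fun k => (hlam k).trans (by rw [hf]))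
  have hne : (4 * (e i - e j) ^ 2 : ℂ) ≠ 0 := by
    simpa using sub_ne_zero.mpr (he.ne hij)
  rw [hF, eq_div_iff hne, hP]
  exact (hpolar.trans (mul_comm _ _)).symm
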